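/- Assume systems (2.15), (3.12) and (5.3) admit unique solutions for all (matched) histories of sup-norm at most φ̄ > 0 and L satisfies condition (5.1). If the trivial solution of (5.3) is asymptotically stable at t₀ (stable at t₀, and there is δ₃ > 0 such that every solution of (5.3) with nonnegative continuous history of sup-norm < δ₃ tends to 0 as t → ∞), then the trivial solutions of (3.12) and of (2.15) are asymptotically stable at t₀. If instead the trivial solution of (5.3) is exponentially stable (there exist δ₅, c₁, c₂ > 0 such that every solution u of (5.3) with nonnegative continuous history ϕ, ‖ϕ‖ ≤ δ₅, satisfies u(t) ≤ c₁‖ϕ‖exp(−c₂(t − t₀)) for all t ≥ t₀), then the trivial solutions of (3.12) and (2.15) are exponentially stable. (Paper's Corollary 2.) -/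

import Mathlib

open Set Filter

noncomputable section

abbrev Euc (n : ℕ) : Type := EuclideanSpace ℝ (Fin n)

/-- A solution of the vector delay system
`x'(t) = A t (x t) + f (t, x t, x (t - h₁ t), …, x (t - hₘ t)) + G t` for `t ≥ t₀`,
with continuous history `φ` on `[t₀ - h̄, t₀]`. -/
def IsVecSol (n m : ℕ) (t₀ hbar : ℝ) (h : Fin m → ℝ → ℝ)
    (A : ℝ → (Euc n →L[ℝ] Euc n)) (f : ℝ → Euc n → (Fin m → Euc n) → Euc n)
    (G : ℝ → Euc n) (φ x : ℝ → Euc n) : Prop :=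
  ContinuousOn x (Ici (t₀ - hbar)) ∧
  (∀ t ∈ Icc (t₀ - hbar) t₀, x t = φ t) ∧
  ∀ t, t₀ ≤ t → HasDerivWithinAt x
    (A t (x t) + f t (x t) (fun i => x (t - h i t)) + G t) (Ici t₀) t

/-- A nonnegative solution of the scalar delay equation
`y'(t) = p t * y t + c t * (L (t, y t, y (t - h₁ t), …, y (t - hₘ t)) + G t)` for `t ≥ t₀`,
with nonnegative continuous history `ϕ` on `[t₀ - h̄, t₀]`. -/
def IsScalSol (m : ℕ) (t₀ hbar : ℝ) (h : Fin m → ℝ → ℝ)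
    (p c : ℝ → ℝ) (L : ℝ → ℝ → (Fin m → ℝ) → ℝ) (G : ℝ → ℝ)
    (ϕ y : ℝ → ℝ) : Prop :=
  ContinuousOn y (Ici (t₀ - hbar)) ∧
  (∀ t ∈ Ici (t₀ - hbar), 0 ≤ y t) ∧
  (∀ t ∈ Icc (t₀ - hbar) t₀, y t = ϕ t) ∧
  ∀ t, t₀ ≤ t → HasDerivWithinAt y
    (p t * y t + c t * (L t (y t) (fun i => y (t - h i t)) + G t)) (Ici t₀) t

/-- The linear majorant `(t, ζ₁, (ζ₂, …, ζ_{m+1})) ↦ μ₁(t,ζ̃)ζ₁ + ∑ μ_{i+1}(t,ζ̃)ζ_{i+1}`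
used in the linearized equations (5.2) and (5.3). -/
def LinL (m : ℕ) (μ : Fin (m + 1) → ℝ → ℝ → ℝ) (ζ : ℝ) :
    ℝ → ℝ → (Fin m → ℝ) → ℝ :=
  fun t a z => μ 0 t ζ * a + ∑ i : Fin m, μ i.succ t ζ * z i

/-!
Write a solution of (2.15) as `x = w z`. Variation of constants bounds `|x t|` by
`V t = |w t| (|x t₀| + ∫ |w⁻¹| |f|)`, and `V' = p V + c |f| ≤ p V + c L(|x|, …)`; solutions of
(3.12) satisfy the same inequality with `V = y`. As long as everything stays below `ζ̃`, condition
(5.1) turns this into a differential inequality for the linear equation (5.3), and an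
integrating factor shows that `V` stays strictly below the solution `u` of (5.3) whose history
exceeds that of `x` (or `y`) by a small `η > 0`. Stability of (5.3) keeps `u` below `ζ̃`, so the
comparison holds for all times and the stability properties of `u` pass to `|x|` and `y`; in the
exponential case one lets `η → 0`. In dimension `0` the coefficients `p` and `c` vanish, so
constants solve (5.3) and neither hypothesis on (5.3) can hold.
-/

open Topology

section Calculus

theorem hasDerivAt_integral_max {E : Type*} [NormedAddCommGroup E] [NormedSpace ℝ E]
    [CompleteSpace E] {F : ℝ → E} {a : ℝ} (hF : ContinuousOn F (Ici a)) (t : ℝ) :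
    HasDerivAt (fun t => ∫ s in a..t, F (max s a)) (F (max t a)) t :=
  ((hF.comp_continuous (continuous_id.max continuous_const) fun s => le_max_right s a)
    |>.integral_hasStrictDerivAt a t).hasDerivAt

theorem exists_hasDerivWithinAt_Ici_add {P p q : ℝ → ℝ} {a : ℝ}
    (hP : ∀ t ≥ a, HasDerivWithinAt P (p t) (Ici a) t) (hq : ContinuousOn q (Ici a)) :
    ∃ K : ℝ → ℝ, ∀ t ≥ a, HasDerivWithinAt K (p t + q t) (Ici a) t :=
  ⟨fun t => P t + ∫ s in a..t, q (max s a), fun t ht => by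
    simpa only [max_eq_left ht] using
      (hP t ht).fun_add (hasDerivAt_integral_max hq t).hasDerivWithinAt⟩

theorem HasDerivWithinAt.of_log {a : ℝ → ℝ} {p t : ℝ} {s : Set ℝ}
    (hpos : ∀ x ∈ s, 0 < a x) (ht : t ∈ s)
    (h : HasDerivWithinAt (fun x => Real.log (a x)) p s t) :
    HasDerivWithinAt a (p * a t) s t := by
  have := h.exp.congr (fun x hx => (Real.exp_log (hpos x hx)).symm)
    (Real.exp_log (hpos t ht)).symm
  rwa [Real.exp_log (hpos t ht), mul_comm] at this

/-- The integrating factor `exp (-K)` turns `g' ≤ k g` into monotonicity of `g exp (-K)`. -/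
theorem neg_of_hasDerivWithinAt_le_mul {t₀ : ℝ} {g g' k K : ℝ → ℝ}
    (hK : ∀ t ≥ t₀, HasDerivWithinAt K (k t) (Ici t₀) t)
    (hg : ∀ t ≥ t₀, HasDerivWithinAt g (g' t) (Ici t₀) t) (h₀ : g t₀ < 0)
    (hle : ∀ t ≥ t₀, (∀ s ∈ Icc t₀ t, g s < 0) → g' t ≤ k t * g t) :
    ∀ t ≥ t₀, g t < 0 := by
  have hgc : ContinuousOn g (Ici t₀) := fun t ht => (hg t ht).continuousWithinAt
  by_contra! hT
  obtain ⟨T, hT, hgT⟩ := hT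
  set S := Ici t₀ ∩ g ⁻¹' Ici 0
  have hbdd : BddBelow S := ⟨t₀, fun s hs => hs.1⟩
  have ht₁ : sInf S ∈ S :=
    (hgc.preimage_isClosed_of_isClosed isClosed_Ici isClosed_Ici).csInf_mem ⟨T, hT, hgT⟩ hbdd
  set t₁ := sInf S
  have hbefore : ∀ s ∈ Ico t₀ t₁, g s < 0 := fun s hs => by
    by_contra! h
    exact (csInf_le hbdd ⟨hs.1, h⟩).not_gt hs.2
  have ht₀₁ : t₀ < t₁ := ht₁.1.lt_of_ne fun h => (h ▸ ht₁.2 : 0 ≤ g t₀).not_gt h₀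
  set G := fun t => g t * Real.exp (-K t)
  have hG : ∀ t ≥ t₀, HasDerivWithinAt G ((g' t - k t * g t) * Real.exp (-K t)) (Ici t₀) t :=
    fun t ht => ((hg t ht).fun_mul (hK t ht).fun_neg.exp).congr_deriv (by ring)
  have hanti : AntitoneOn G (Icc t₀ t₁) := by
    refine antitoneOn_of_hasDerivWithinAt_nonpos
      (f' := fun t => (g' t - k t * g t) * Real.exp (-K t)) (convex_Icc _ _)
      (fun t ht => (hG t ht.1).continuousWithinAt.mono Icc_subset_Ici_self) ?_ ?_
    · rw [interior_Icc]
      exact fun t ht => (hG t ht.1.le).mono (Ioo_subset_Icc_self.trans Icc_subset_Ici_self)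
    · rw [interior_Icc]
      intro t ht
      have := hle t ht.1.le fun s hs => hbefore s ⟨hs.1, hs.2.trans_lt ht.2⟩
      exact mul_nonpos_of_nonpos_of_nonneg (by linarith) (Real.exp_pos _).le
  have hG₁₀ := hanti ⟨le_rfl, ht₀₁.le⟩ ⟨ht₀₁.le, le_rfl⟩ ht₀₁.le
  have hG₀ : G t₀ < 0 := mul_neg_of_neg_of_pos h₀ (Real.exp_pos _)
  have hG₁ : 0 ≤ G t₁ := mul_nonneg ht₁.2 (Real.exp_pos _).le
  linarith

end Calculus

section FundamentalMatrix

variable {E : Type*} [NormedAddCommGroup E] [NormedSpace ℝ E] {t₀ : ℝ}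
  {A w winv : ℝ → (E →L[ℝ] E)}

theorem norm_pos_of_comp_eq_id [Nontrivial E] {T S : E →L[ℝ] E}
    (h : T.comp S = ContinuousLinearMap.id ℝ E) : 0 < ‖T‖ := by
  refine norm_pos_iff.2 fun hT => ?_
  have := ContinuousLinearMap.norm_id (𝕜 := ℝ) (E := E)
  rw [← h, hT, ContinuousLinearMap.zero_comp, norm_zero] at this
  exact zero_ne_one this

theorem hasDerivWithinAt_inverse_of_comp_eq_id [CompleteSpace E]
    (hw : ∀ t ≥ t₀, HasDerivWithinAt w ((A t).comp (w t)) (Ici t₀) t)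
    (hwinv : ∀ t ≥ t₀, (w t).comp (winv t) = ContinuousLinearMap.id ℝ E ∧
      (winv t).comp (w t) = ContinuousLinearMap.id ℝ E) {t : ℝ} (ht : t₀ ≤ t) :
    HasDerivWithinAt winv (-((winv t).comp (A t))) (Ici t₀) t := by
  let W : ∀ s ≥ t₀, (E →L[ℝ] E)ˣ := fun s hs => ⟨w s, winv s, (hwinv s hs).1, (hwinv s hs).2⟩
  have hW : ∀ s ≥ t₀, winv s = Ring.inverse (w s) := fun s hs =>
    (Ring.inverse_unit (W s hs)).symm
  have := ((hasFDerivAt_ringInverse (W t ht)).comp_hasDerivWithinAt t (hw t ht)).congr_of_mem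
    (f₁ := winv) hW ht
  refine this.congr_deriv ?_
  simp only [W, neg_apply, ContinuousLinearMap.mulLeftRight_apply, Units.inv_mk,
    ContinuousLinearMap.mul_def, ContinuousLinearMap.comp_assoc, (hwinv t ht).1,
    ContinuousLinearMap.comp_id]

theorem continuousOn_inverse_of_comp_eq_id [CompleteSpace E]
    (hw : ∀ t ≥ t₀, HasDerivWithinAt w ((A t).comp (w t)) (Ici t₀) t)
    (hwinv : ∀ t ≥ t₀, (w t).comp (winv t) = ContinuousLinearMap.id ℝ E ∧
      (winv t).comp (w t) = ContinuousLinearMap.id ℝ E) :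
    ContinuousOn winv (Ici t₀) := fun _ ht =>
  (hasDerivWithinAt_inverse_of_comp_eq_id hw hwinv ht).continuousWithinAt

theorem continuousOn_norm_mul_norm_inverse [CompleteSpace E]
    (hw : ∀ t ≥ t₀, HasDerivWithinAt w ((A t).comp (w t)) (Ici t₀) t)
    (hwinv : ∀ t ≥ t₀, (w t).comp (winv t) = ContinuousLinearMap.id ℝ E ∧
      (winv t).comp (w t) = ContinuousLinearMap.id ℝ E) :
    ContinuousOn (fun t => ‖w t‖ * ‖winv t‖) (Ici t₀) :=
  (fun t ht => (hw t ht).continuousWithinAt.norm.mul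
    ((continuousOn_inverse_of_comp_eq_id hw hwinv) t ht).norm)

/-- Variation of constants: `w⁻¹ x` has derivative `w⁻¹ g`. -/
theorem exists_norm_majorant [CompleteSpace E] [Nontrivial E] {p : ℝ → ℝ} {x g : ℝ → E}
    (hw₀ : w t₀ = ContinuousLinearMap.id ℝ E)
    (hw : ∀ t ≥ t₀, HasDerivWithinAt w ((A t).comp (w t)) (Ici t₀) t)
    (hwinv : ∀ t ≥ t₀, (w t).comp (winv t) = ContinuousLinearMap.id ℝ E ∧
      (winv t).comp (w t) = ContinuousLinearMap.id ℝ E)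
    (hp : ∀ t ≥ t₀, HasDerivWithinAt (fun s => Real.log ‖w s‖) (p t) (Ici t₀) t)
    (hx : ∀ t ≥ t₀, HasDerivWithinAt x (A t (x t) + g t) (Ici t₀) t)
    (hg : ContinuousOn g (Ici t₀)) :
    ∃ V : ℝ → ℝ, V t₀ = ‖x t₀‖ ∧ (∀ t ≥ t₀, ‖x t‖ ≤ V t) ∧
      ∀ t ≥ t₀, HasDerivWithinAt V (p t * V t + ‖w t‖ * ‖winv t‖ * ‖g t‖) (Ici t₀) t := by
  have hwinvc := continuousOn_inverse_of_comp_eq_id hw hwinv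
  have hwinv₀ : winv t₀ = ContinuousLinearMap.id ℝ E := by
    simpa [hw₀] using (hwinv t₀ le_rfl).2
  set ρ : ℝ → ℝ := fun t => ‖x t₀‖ + ∫ s in t₀..t, ‖winv (max s t₀)‖ * ‖g (max s t₀)‖
  have hρ : ∀ t, HasDerivAt ρ (‖winv (max t t₀)‖ * ‖g (max t t₀)‖) t := fun t =>
    (hasDerivAt_integral_max (hwinvc.norm.mul hg.norm) t).const_add _
  have hz : ∀ t ≥ t₀, HasDerivWithinAt (fun s => winv s (x s)) (winv t (g t)) (Ici t₀) t :=
    fun t ht => ((hasDerivWithinAt_inverse_of_comp_eq_id hw hwinv ht).clm_apply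
      (hx t ht)).congr_deriv (by simp)
  have hzρ : ∀ t ≥ t₀, ‖winv t (x t)‖ ≤ ρ t := fun t ht =>
    image_norm_le_of_norm_deriv_right_le_deriv_boundary
      (fun s hs => (hz s hs.1).continuousWithinAt.mono Icc_subset_Ici_self)
      (fun s hs => (hz s hs.1).mono (Ici_subset_Ici.2 hs.1)) (by simp [ρ, hwinv₀]) hρ
      (fun s hs => by
        simpa only [max_eq_left hs.1] using (winv s).le_opNorm (g s)) ⟨ht, le_rfl⟩
  refine ⟨fun t => ‖w t‖ * ρ t, by simp [ρ, hw₀], fun t ht => ?_, fun t ht => ?_⟩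
  · calc ‖x t‖ = ‖w t (winv t (x t))‖ := by
          rw [← ContinuousLinearMap.comp_apply, (hwinv t ht).1, ContinuousLinearMap.id_apply]
      _ ≤ ‖w t‖ * ‖winv t (x t)‖ := (w t).le_opNorm _
      _ ≤ ‖w t‖ * ρ t := mul_le_mul_of_nonneg_left (hzρ t ht) (norm_nonneg _)
  · have hW := (hp t ht).of_log (fun s hs => norm_pos_of_comp_eq_id (hwinv s hs).1) ht
    refine (hW.fun_mul (hρ t).hasDerivWithinAt).congr_deriv ?_
    rw [max_eq_left ht]
    ring

end FundamentalMatrix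

theorem LinL_mono {m : ℕ} {μ : Fin (m + 1) → ℝ → ℝ → ℝ} {ζ t a b : ℝ} {z z' : Fin m → ℝ}
    (hμ : ∀ i, 0 ≤ μ i t ζ) (hab : a ≤ b) (hz : ∀ i, z i ≤ z' i) :
    LinL m μ ζ t a z ≤ LinL m μ ζ t b z' :=
  add_le_add (mul_le_mul_of_nonneg_left hab (hμ 0))
    (Finset.sum_le_sum fun i _ => mul_le_mul_of_nonneg_left (hz i) (hμ _))

theorem ContinuousOn.comp_sub_delay {X : Type*} [TopologicalSpace X] {x : ℝ → X} {d : ℝ → ℝ}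
    {t₀ hbar : ℝ} (hx : ContinuousOn x (Ici (t₀ - hbar))) (hd : ContinuousOn d (Ici t₀))
    (hdb : ∀ t ≥ t₀, d t ≤ hbar) : ContinuousOn (fun t => x (t - d t)) (Ici t₀) :=
  hx.comp (continuousOn_id.sub hd) fun t ht => by
    simp only [mem_Ici] at ht ⊢
    linarith [hdb t ht]

section Comparison

variable {m : ℕ} {t₀ hlow hbar ζ : ℝ} {h : Fin m → ℝ → ℝ} {p c K : ℝ → ℝ}
  {μ : Fin (m + 1) → ℝ → ℝ → ℝ} {L : ℝ → ℝ → (Fin m → ℝ) → ℝ} {ϱ u : ℝ → ℝ}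

/-- While `V < u`, condition (5.1) and the monotonicity of `LinL` give
`(V - u)' ≤ (p + c μ₀) (V - u)`. -/
theorem lt_of_majorant (hbar₀ : 0 ≤ hbar) (hpos : 0 < hlow)
    (hhb : ∀ i, ∀ t ≥ t₀, hlow ≤ h i t ∧ h i t ≤ hbar) (hc : ∀ t ≥ t₀, 0 ≤ c t)
    (hμ : ∀ i, ∀ t ≥ t₀, 0 ≤ μ i t ζ)
    (hL : ∀ t ≥ t₀, ∀ a z, 0 ≤ a → a ≤ ζ → (∀ i, 0 ≤ z i ∧ z i ≤ ζ) →
      L t a z ≤ LinL m μ ζ t a z)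
    (hK : ∀ t ≥ t₀, HasDerivWithinAt K (p t + c t * μ 0 t ζ) (Ici t₀) t)
    (hu : IsScalSol m t₀ hbar h p c (LinL m μ ζ) (fun _ => 0) ϱ u) (huζ : ∀ t ≥ t₀, u t ≤ ζ)
    {v V D : ℝ → ℝ} (hv : ∀ t ≥ t₀ - hbar, 0 ≤ v t)
    (hvu : ∀ t ∈ Icc (t₀ - hbar) t₀, v t < u t) (hvζ : ∀ t ∈ Icc (t₀ - hbar) t₀, v t ≤ ζ)
    (hvV : ∀ t ≥ t₀, v t ≤ V t) (hV₀ : V t₀ = v t₀)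
    (hV : ∀ t ≥ t₀, HasDerivWithinAt V (D t) (Ici t₀) t)
    (hD : ∀ t ≥ t₀, D t ≤ p t * V t + c t * L t (v t) (fun i => v (t - h i t))) :
    ∀ t ≥ t₀, V t < u t := by
  have h₀ : V t₀ - u t₀ < 0 := sub_neg.2 (hV₀ ▸ hvu t₀ ⟨by linarith, le_rfl⟩)
  refine fun t ht => sub_neg.1 (neg_of_hasDerivWithinAt_le_mul hK
    (fun t ht => (hV t ht).sub (hu.2.2.2 t ht)) h₀ (fun t ht hlt => ?_) t ht)
  have hdom : ∀ s ∈ Icc (t₀ - hbar) t, v s ≤ u s ∧ v s ≤ ζ := by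
    rintro s ⟨hs₁, hs₂⟩
    rcases le_or_gt s t₀ with hs | hs
    · exact ⟨(hvu s ⟨hs₁, hs⟩).le, hvζ s ⟨hs₁, hs⟩⟩
    · have := (hvV s hs.le).trans (sub_neg.1 (hlt s ⟨hs.le, hs₂⟩)).le
      exact ⟨this, this.trans (huζ s hs.le)⟩
  have hdelay : ∀ i, t - h i t ∈ Icc (t₀ - hbar) t := fun i => by
    constructor <;> linarith [hhb i t ht]
  have hLV : L t (v t) (fun i => v (t - h i t)) ≤ LinL m μ ζ t (V t) (fun i => u (t - h i t)) :=
    (hL t ht _ _ (hv t (by linarith)) (hdom t ⟨by linarith, le_rfl⟩).2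
      fun i => ⟨hv _ (hdelay i).1, (hdom _ (hdelay i)).2⟩).trans
    (LinL_mono (hμ · t ht) (hvV t ht) fun i => (hdom _ (hdelay i)).1)
  have hcL := mul_le_mul_of_nonneg_left hLV (hc t ht)
  simp only [LinL, Pi.sub_apply] at hcL ⊢
  linarith [hD t ht]

theorem IsScalSol.lt_of_history_lt {ϕ y : ℝ → ℝ}
    (hy : IsScalSol m t₀ hbar h p c L (fun _ => 0) ϕ y) (hbar₀ : 0 ≤ hbar) (hpos : 0 < hlow)
    (hhb : ∀ i, ∀ t ≥ t₀, hlow ≤ h i t ∧ h i t ≤ hbar) (hc : ∀ t ≥ t₀, 0 ≤ c t)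
    (hμ : ∀ i, ∀ t ≥ t₀, 0 ≤ μ i t ζ)
    (hL : ∀ t ≥ t₀, ∀ a z, 0 ≤ a → a ≤ ζ → (∀ i, 0 ≤ z i ∧ z i ≤ ζ) →
      L t a z ≤ LinL m μ ζ t a z)
    (hK : ∀ t ≥ t₀, HasDerivWithinAt K (p t + c t * μ 0 t ζ) (Ici t₀) t)
    (hu : IsScalSol m t₀ hbar h p c (LinL m μ ζ) (fun _ => 0) ϱ u) (huζ : ∀ t ≥ t₀, u t ≤ ζ)
    (hϕϱ : ∀ t ∈ Icc (t₀ - hbar) t₀, ϕ t < ϱ t) (hϕζ : ∀ t ∈ Icc (t₀ - hbar) t₀, ϕ t ≤ ζ) :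
    ∀ t ≥ t₀, y t < u t :=
  lt_of_majorant hbar₀ hpos hhb hc hμ hL hK hu huζ hy.2.1
    (fun t ht => by rw [hy.2.2.1 t ht, hu.2.2.1 t ht]; exact hϕϱ t ht)
    (fun t ht => hy.2.2.1 t ht ▸ hϕζ t ht) (fun _ _ => le_rfl) rfl hy.2.2.2
    (fun t _ => by rw [add_zero])

theorem IsVecSol.norm_lt_of_history_lt {n : ℕ} [NeZero n] {A w winv : ℝ → (Euc n →L[ℝ] Euc n)}
    {f : ℝ → Euc n → (Fin m → Euc n) → Euc n} {φ x : ℝ → Euc n}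
    (hx : IsVecSol n m t₀ hbar h A f (fun _ => 0) φ x) (hbar₀ : 0 ≤ hbar) (hpos : 0 < hlow)
    (hhc : ∀ i, ContinuousOn (h i) (Ici t₀))
    (hhb : ∀ i, ∀ t ≥ t₀, hlow ≤ h i t ∧ h i t ≤ hbar)
    (hfc : ContinuousOn (fun q : ℝ × Euc n × (Fin m → Euc n) => f q.1 q.2.1 q.2.2)
      (Ici t₀ ×ˢ (univ : Set (Euc n × (Fin m → Euc n)))))
    (hLf : ∀ t ≥ t₀, ∀ a : Euc n, ∀ z : Fin m → Euc n, ‖f t a z‖ ≤ L t ‖a‖ (fun i => ‖z i‖))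
    (hw₀ : w t₀ = ContinuousLinearMap.id ℝ (Euc n))
    (hw : ∀ t ≥ t₀, HasDerivWithinAt w ((A t).comp (w t)) (Ici t₀) t)
    (hwinv : ∀ t ≥ t₀, (w t).comp (winv t) = ContinuousLinearMap.id ℝ (Euc n) ∧
      (winv t).comp (w t) = ContinuousLinearMap.id ℝ (Euc n))
    (hp : ∀ t ≥ t₀, HasDerivWithinAt (fun s => Real.log ‖w s‖) (p t) (Ici t₀) t)
    (hc : ∀ t ≥ t₀, c t = ‖w t‖ * ‖winv t‖) (hμ : ∀ i, ∀ t ≥ t₀, 0 ≤ μ i t ζ)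
    (hL : ∀ t ≥ t₀, ∀ a z, 0 ≤ a → a ≤ ζ → (∀ i, 0 ≤ z i ∧ z i ≤ ζ) →
      L t a z ≤ LinL m μ ζ t a z)
    (hK : ∀ t ≥ t₀, HasDerivWithinAt K (p t + c t * μ 0 t ζ) (Ici t₀) t)
    (hu : IsScalSol m t₀ hbar h p c (LinL m μ ζ) (fun _ => 0) ϱ u) (huζ : ∀ t ≥ t₀, u t ≤ ζ)
    (hφϱ : ∀ t ∈ Icc (t₀ - hbar) t₀, ‖φ t‖ < ϱ t) (hφζ : ∀ t ∈ Icc (t₀ - hbar) t₀, ‖φ t‖ ≤ ζ) :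
    ∀ t ≥ t₀, ‖x t‖ < u t := by
  obtain ⟨hxc, hxφ, hx'⟩ := hx
  have hg : ContinuousOn (fun t => f t (x t) fun i => x (t - h i t)) (Ici t₀) :=
    hfc.comp (continuousOn_id.prodMk ((hxc.mono (Ici_subset_Ici.2 (by linarith))).prodMk
      (continuousOn_pi.2 fun i => hxc.comp_sub_delay (hhc i) fun t ht => (hhb i t ht).2)))
      fun t ht => ⟨ht, mem_univ _⟩
  obtain ⟨V, hV₀, hxV, hV⟩ :=
    exists_norm_majorant hw₀ hw hwinv hp (fun t ht => by simpa using hx' t ht) hg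
  have hc₀ : ∀ t ≥ t₀, 0 ≤ c t := fun t ht => hc t ht ▸ by positivity
  have hVu := lt_of_majorant hbar₀ hpos hhb hc₀ hμ hL hK hu huζ (v := fun t => ‖x t‖)
    (fun _ _ => norm_nonneg _) (fun t ht => by rw [hxφ t ht, hu.2.2.1 t ht]; exact hφϱ t ht)
    (fun t ht => hxφ t ht ▸ hφζ t ht) hxV hV₀ hV fun t ht => by
      rw [← hc t ht]
      exact add_le_add_right (mul_le_mul_of_nonneg_left (hLf t ht _ _) (hc₀ t ht)) _
  exact fun t ht => (hxV t ht).trans_lt (hVu t ht)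

end Comparison

section Stability

/-! Stability notions for a relation `R ϕ y` between a nonnegative history `ϕ` on
`[t₀ - h̄, t₀]` and a trajectory `y`, in the form the paper uses for its scalar equations; the
vector system enters through `NormRel`. -/

variable {t₀ hbar ζ r : ℝ} {R U : (ℝ → ℝ) → (ℝ → ℝ) → Prop}

def StableAt (t₀ hbar : ℝ) (R : (ℝ → ℝ) → (ℝ → ℝ) → Prop) : Prop :=
  ∀ ε > 0, ∃ δ > 0, ∀ ϕ y : ℝ → ℝ,
    ContinuousOn ϕ (Icc (t₀ - hbar) t₀) → (∀ t ∈ Icc (t₀ - hbar) t₀, 0 ≤ ϕ t) →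
    (∀ t ∈ Icc (t₀ - hbar) t₀, ϕ t < δ) → R ϕ y → ∀ t ≥ t₀, y t < ε

def AttractiveAt (t₀ hbar : ℝ) (R : (ℝ → ℝ) → (ℝ → ℝ) → Prop) : Prop :=
  ∃ δ > 0, ∀ ϕ y : ℝ → ℝ,
    ContinuousOn ϕ (Icc (t₀ - hbar) t₀) → (∀ t ∈ Icc (t₀ - hbar) t₀, 0 ≤ ϕ t) →
    (∀ t ∈ Icc (t₀ - hbar) t₀, ϕ t < δ) → R ϕ y → Tendsto y atTop (𝓝 0)

def ExpStableAt (t₀ hbar : ℝ) (R : (ℝ → ℝ) → (ℝ → ℝ) → Prop) : Prop :=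
  ∃ δ > 0, ∃ c₁ > 0, ∃ c₂ > 0, ∀ ϕ y : ℝ → ℝ,
    ContinuousOn ϕ (Icc (t₀ - hbar) t₀) → (∀ t ∈ Icc (t₀ - hbar) t₀, 0 ≤ ϕ t) →
    (∀ t ∈ Icc (t₀ - hbar) t₀, ϕ t ≤ δ) → R ϕ y →
    ∀ t ≥ t₀, y t ≤ c₁ * sSup (ϕ '' Icc (t₀ - hbar) t₀) * Real.exp (-c₂ * (t - t₀))

def NormRel {X : Type*} [Norm X] (S : (ℝ → X) → (ℝ → X) → Prop) (ϕ y : ℝ → ℝ) : Prop :=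
  ∃ φ x, S φ x ∧ ϕ = (‖φ ·‖) ∧ y = (‖x ·‖)

def Dominates (t₀ hbar ζ r : ℝ) (U R : (ℝ → ℝ) → (ℝ → ℝ) → Prop) : Prop :=
  ∀ ϕ y, ContinuousOn ϕ (Icc (t₀ - hbar) t₀) → (∀ t ∈ Icc (t₀ - hbar) t₀, 0 ≤ ϕ t) → R ϕ y →
    ∀ η > 0, (∀ t ∈ Icc (t₀ - hbar) t₀, ϕ t + η ≤ r) →
    ∃ u, U (fun t => ϕ t + η) u ∧ ((∀ t ≥ t₀, u t ≤ ζ) → ∀ t ≥ t₀, y t ≤ u t)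

theorem Dominates.of_lt
    (hex : ∀ ϱ, ContinuousOn ϱ (Icc (t₀ - hbar) t₀) → (∀ t ∈ Icc (t₀ - hbar) t₀, 0 ≤ ϱ t) →
      (∀ t ∈ Icc (t₀ - hbar) t₀, ϱ t ≤ r) → ∃ u, U ϱ u)
    (hlt : ∀ ϕ y ϱ u, R ϕ y → U ϱ u → (∀ t ∈ Icc (t₀ - hbar) t₀, ϕ t < ϱ t) →
      (∀ t ∈ Icc (t₀ - hbar) t₀, ϕ t ≤ r) → (∀ t ≥ t₀, u t ≤ ζ) → ∀ t ≥ t₀, y t < u t) :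
    Dominates t₀ hbar ζ r U R := by
  intro ϕ y hϕc hϕ₀ hR η hη hϕr
  obtain ⟨u, hu⟩ := hex (fun t => ϕ t + η) (hϕc.add continuousOn_const)
    (fun t ht => by linarith [hϕ₀ t ht]) hϕr
  exact ⟨u, hu, fun huζ t ht => (hlt ϕ y _ u hR hu (fun s _ => lt_add_of_pos_right _ hη)
    (fun s hs => by linarith [hϕr s hs]) huζ t ht).le⟩

theorem StableAt.of_dominates (hU : StableAt t₀ hbar U) (hD : Dominates t₀ hbar ζ r U R)
    (hζ : 0 < ζ) (hr : 0 < r) : StableAt t₀ hbar R := by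
  intro ε hε
  obtain ⟨δ, hδ, hUδ⟩ := hU (min ε ζ) (lt_min hε hζ)
  have hη : 0 < min δ r / 2 := by positivity
  refine ⟨min δ r / 2, hη, fun ϕ y hϕc hϕ₀ hϕδ hR => ?_⟩
  have hb : ∀ t ∈ Icc (t₀ - hbar) t₀, ϕ t + min δ r / 2 < min δ r := fun t ht => by
    linarith [hϕδ t ht]
  obtain ⟨u, hu, hyu⟩ := hD ϕ y hϕc hϕ₀ hR _ hη fun t ht => (hb t ht).le.trans (min_le_right _ _)
  have hUu := hUδ (fun t => ϕ t + min δ r / 2) u (hϕc.add continuousOn_const)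
    (fun t ht => by linarith [hϕ₀ t ht])
    (fun t ht => (hb t ht).trans_le (min_le_left _ _)) hu
  intro t ht
  exact (hyu (fun s hs => (hUu s hs).le.trans (min_le_right _ _)) t ht).trans_lt
    ((hUu t ht).trans_le (min_le_left _ _))

theorem AttractiveAt.of_dominates (hUs : StableAt t₀ hbar U) (hUa : AttractiveAt t₀ hbar U)
    (hD : Dominates t₀ hbar ζ r U R) (hζ : 0 < ζ) (hr : 0 < r)
    (hR : ∀ ϕ y, R ϕ y → ∀ t ≥ t₀, 0 ≤ y t) : AttractiveAt t₀ hbar R := by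
  obtain ⟨δ₁, hδ₁, hU₁⟩ := hUs ζ hζ
  obtain ⟨δ₂, hδ₂, hU₂⟩ := hUa
  have hη : 0 < min (min δ₁ δ₂) r / 2 := by positivity
  refine ⟨min (min δ₁ δ₂) r / 2, hη, fun ϕ y hϕc hϕ₀ hϕδ hRϕ => ?_⟩
  have hb : ∀ t ∈ Icc (t₀ - hbar) t₀, ϕ t + min (min δ₁ δ₂) r / 2 < min (min δ₁ δ₂) r :=
    fun t ht => by linarith [hϕδ t ht]
  obtain ⟨u, hu, hyu⟩ := hD ϕ y hϕc hϕ₀ hRϕ _ hη fun t ht => (hb t ht).le.trans (min_le_right _ _)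
  have hc : ContinuousOn (fun t => ϕ t + min (min δ₁ δ₂) r / 2) (Icc (t₀ - hbar) t₀) :=
    hϕc.add continuousOn_const
  have h₀ : ∀ t ∈ Icc (t₀ - hbar) t₀, 0 ≤ ϕ t + min (min δ₁ δ₂) r / 2 := fun t ht => by
    linarith [hϕ₀ t ht]
  have huζ := hU₁ _ u hc h₀ (fun t ht => (hb t ht).trans_le
    ((min_le_left _ _).trans (min_le_left _ _))) hu
  exact squeeze_zero' (eventually_atTop.2 ⟨t₀, hR ϕ y hRϕ⟩)
    (eventually_atTop.2 ⟨t₀, hyu fun t ht => (huζ t ht).le⟩)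
    (hU₂ _ u hc h₀ (fun t ht => (hb t ht).trans_le
      ((min_le_left _ _).trans (min_le_right _ _))) hu)

theorem ExpStableAt.of_dominates (hU : ExpStableAt t₀ hbar U) (hD : Dominates t₀ hbar ζ r U R)
    (hζ : 0 < ζ) (hr : 0 < r) (hbar₀ : 0 ≤ hbar) : ExpStableAt t₀ hbar R := by
  obtain ⟨δ₅, hδ₅, c₁, hc₁, c₂, hc₂, hU⟩ := hU
  set δ := min δ₅ (min r (ζ / c₁)) / 2 with hδdef
  have hδ : 0 < δ := by positivity
  have h2δ : 2 * δ ≤ δ₅ ∧ 2 * δ ≤ r ∧ c₁ * (2 * δ) ≤ ζ := by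
    refine ⟨by linarith [min_le_left δ₅ (min r (ζ / c₁))], ?_, ?_⟩
    · linarith [min_le_right δ₅ (min r (ζ / c₁)), min_le_left r (ζ / c₁)]
    · rw [← le_div_iff₀' hc₁]
      linarith [min_le_right δ₅ (min r (ζ / c₁)), min_le_right r (ζ / c₁)]
  refine ⟨δ, hδ, c₁, hc₁, c₂, hc₂, fun ϕ y hϕc hϕ₀ hϕδ hRϕ t ht => ?_⟩
  set I := Icc (t₀ - hbar) t₀
  have hI : I.Nonempty := nonempty_Icc.2 (by linarith)
  have hbdd : BddAbove (ϕ '' I) := ⟨δ, forall_mem_image.2 hϕδ⟩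
  have hS : sSup (ϕ '' I) ≤ δ := csSup_le (hI.image _) (forall_mem_image.2 hϕδ)
  have hS₀ : 0 ≤ sSup (ϕ '' I) :=
    (hϕ₀ t₀ ⟨by linarith, le_rfl⟩).trans (le_csSup hbdd (mem_image_of_mem _ ⟨by linarith, le_rfl⟩))
  have key : ∀ η ∈ Ioc 0 δ,
      y t ≤ c₁ * (sSup (ϕ '' I) + η) * Real.exp (-c₂ * (t - t₀)) := by
    rintro η ⟨hη, hηδ⟩
    have hb : ∀ s ∈ I, ϕ s + η ≤ 2 * δ := fun s hs => by linarith [hϕδ s hs]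
    obtain ⟨u, hu, hyu⟩ := hD ϕ y hϕc hϕ₀ hRϕ η hη fun s hs => (hb s hs).trans h2δ.2.1
    have hsup : sSup ((fun s => ϕ s + η) '' I) ≤ sSup (ϕ '' I) + η :=
      csSup_le (hI.image _) (forall_mem_image.2 fun s hs =>
        add_le_add_left (le_csSup hbdd (mem_image_of_mem _ hs)) _)
    have hu_le : ∀ s ≥ t₀, u s ≤ c₁ * (sSup (ϕ '' I) + η) * Real.exp (-c₂ * (s - t₀)) :=
      fun s hs => (hU (fun s => ϕ s + η) u (hϕc.add continuousOn_const)
        (fun s hs => by linarith [hϕ₀ s hs])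
        (fun s hs => (hb s hs).trans h2δ.1) hu s hs).trans (by gcongr)
    have huζ : ∀ s ≥ t₀, u s ≤ ζ := fun s hs => by
      have he : Real.exp (-c₂ * (s - t₀)) ≤ 1 :=
        Real.exp_le_one_iff.2 (mul_nonpos_of_nonpos_of_nonneg (by linarith) (by linarith))
      calc u s ≤ c₁ * (sSup (ϕ '' I) + η) * Real.exp (-c₂ * (s - t₀)) := hu_le s hs
        _ ≤ c₁ * (2 * δ) * 1 := by gcongr; linarith
        _ ≤ ζ := by linarith [h2δ.2.2]
    exact (hyu huζ t ht).trans (hu_le t ht)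
  have hlim : Tendsto (fun η => c₁ * (sSup (ϕ '' I) + η) * Real.exp (-c₂ * (t - t₀)))
      (𝓝[>] 0) (𝓝 (c₁ * sSup (ϕ '' I) * Real.exp (-c₂ * (t - t₀)))) :=
    (Continuous.tendsto' (by fun_prop) 0 _ (by simp)).mono_left nhdsWithin_le_nhds
  exact ge_of_tendsto hlim (mem_of_superset (Ioc_mem_nhdsGT hδ) key)

section Norm

variable {X : Type*} [SeminormedAddCommGroup X] {S : (ℝ → X) → (ℝ → X) → Prop}

theorem StableAt.norm (hS : StableAt t₀ hbar (NormRel S)) :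
    ∀ ε > 0, ∃ δ > 0, ∀ φ x : ℝ → X, ContinuousOn φ (Icc (t₀ - hbar) t₀) →
      (∀ t ∈ Icc (t₀ - hbar) t₀, ‖φ t‖ < δ) → S φ x → ∀ t ≥ t₀, ‖x t‖ < ε :=
  fun ε hε => (hS ε hε).imp fun _ ⟨hδ, H⟩ => ⟨hδ, fun φ x hφ hb hx =>
    H _ _ hφ.norm (fun _ _ => norm_nonneg _) hb ⟨φ, x, hx, rfl, rfl⟩⟩

theorem AttractiveAt.norm (hS : AttractiveAt t₀ hbar (NormRel S)) :
    ∃ δ > 0, ∀ φ x : ℝ → X, ContinuousOn φ (Icc (t₀ - hbar) t₀) →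
      (∀ t ∈ Icc (t₀ - hbar) t₀, ‖φ t‖ < δ) → S φ x → Tendsto (fun t => ‖x t‖) atTop (𝓝 0) :=
  hS.imp fun _ ⟨hδ, H⟩ => ⟨hδ, fun φ x hφ hb hx =>
    H _ _ hφ.norm (fun _ _ => norm_nonneg _) hb ⟨φ, x, hx, rfl, rfl⟩⟩

theorem ExpStableAt.norm (hS : ExpStableAt t₀ hbar (NormRel S)) :
    ∃ δ > 0, ∃ c₁ > 0, ∃ c₂ > 0, ∀ φ x : ℝ → X, ContinuousOn φ (Icc (t₀ - hbar) t₀) →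
      (∀ t ∈ Icc (t₀ - hbar) t₀, ‖φ t‖ ≤ δ) → S φ x → ∀ t ≥ t₀,
      ‖x t‖ ≤ c₁ * sSup ((fun s => ‖φ s‖) '' Icc (t₀ - hbar) t₀) * Real.exp (-c₂ * (t - t₀)) :=
  hS.imp fun _ ⟨hδ, c₁, hc₁, c₂, hc₂, H⟩ => ⟨hδ, c₁, hc₁, c₂, hc₂, fun φ x hφ hb hx =>
    H _ _ hφ.norm (fun _ _ => norm_nonneg _) hb ⟨φ, x, hx, rfl, rfl⟩⟩

end Norm

theorem not_attractiveAt_of_const (hU : ∀ a, 0 ≤ a → U (fun _ => a) (fun _ => a)) :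
    ¬ AttractiveAt t₀ hbar U := by
  rintro ⟨δ, hδ, H⟩
  have := H (fun _ => δ / 2) (fun _ => δ / 2) continuousOn_const (fun _ _ => by positivity)
    (fun _ _ => by linarith) (hU _ (by positivity))
  exact (half_pos hδ).ne' (tendsto_nhds_unique tendsto_const_nhds this)

theorem not_expStableAt_of_const (hbar₀ : 0 ≤ hbar)
    (hU : ∀ a, 0 ≤ a → U (fun _ => a) (fun _ => a)) : ¬ ExpStableAt t₀ hbar U := by
  rintro ⟨δ, hδ, c₁, -, c₂, hc₂, H⟩
  have hb := H (fun _ => δ) (fun _ => δ) continuousOn_const (fun _ _ => hδ.le)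
    (fun _ _ => le_rfl) (hU δ hδ.le)
  rw [(nonempty_Icc.2 (by linarith)).image_const, csSup_singleton] at hb
  have hdecay : Tendsto (fun t => c₁ * δ * Real.exp (-c₂ * (t - t₀))) atTop (𝓝 0) := by
    simpa [← sub_eq_add_neg] using (Real.tendsto_exp_atBot.comp ((tendsto_id.atTop_add
      (tendsto_const_nhds (x := -t₀))).const_mul_atTop_of_neg (neg_neg_of_pos hc₂))).const_mul
      (c₁ * δ)
  exact hδ.not_ge (ge_of_tendsto hdecay (eventually_atTop.2 ⟨t₀, hb⟩))

end Stability

theorem exists_isScalSol_of_norm {E : Type*} [NormedAddCommGroup E] [NormedSpace ℝ E]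
    [Nontrivial E] {m : ℕ} {t₀ hbar r : ℝ} {h : Fin m → ℝ → ℝ} {p c G : ℝ → ℝ}
    {L : ℝ → ℝ → (Fin m → ℝ) → ℝ}
    (hex : ∀ φ : ℝ → E, ContinuousOn φ (Icc (t₀ - hbar) t₀) →
      (∀ t ∈ Icc (t₀ - hbar) t₀, ‖φ t‖ ≤ r) →
      ∃ u, IsScalSol m t₀ hbar h p c L G (fun t => ‖φ t‖) u)
    {ϱ : ℝ → ℝ} (hϱc : ContinuousOn ϱ (Icc (t₀ - hbar) t₀))
    (hϱ₀ : ∀ t ∈ Icc (t₀ - hbar) t₀, 0 ≤ ϱ t) (hϱr : ∀ t ∈ Icc (t₀ - hbar) t₀, ϱ t ≤ r) :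
    ∃ u, IsScalSol m t₀ hbar h p c L G ϱ u := by
  obtain ⟨e, he⟩ := exists_norm_eq E zero_le_one
  have hnorm : ∀ t ∈ Icc (t₀ - hbar) t₀, ‖ϱ t • e‖ = ϱ t := fun t ht => by
    rw [norm_smul, he, mul_one, Real.norm_of_nonneg (hϱ₀ t ht)]
  obtain ⟨u, huc, hu₀, huϱ, hu'⟩ := hex (fun t => ϱ t • e) (hϱc.smul continuousOn_const)
    fun t ht => (hnorm t ht).trans_le (hϱr t ht)
  exact ⟨u, huc, hu₀, fun t ht => (huϱ t ht).trans (hnorm t ht), hu'⟩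

theorem isScalSol_const_of_subsingleton {E : Type*} [NormedAddCommGroup E] [NormedSpace ℝ E]
    [Subsingleton E] {w winv : ℝ → (E →L[ℝ] E)} {m : ℕ} {t₀ hbar a : ℝ} {h : Fin m → ℝ → ℝ}
    {p c : ℝ → ℝ} {L : ℝ → ℝ → (Fin m → ℝ) → ℝ}
    (hp : ∀ t ≥ t₀, HasDerivWithinAt (fun s => Real.log ‖w s‖) (p t) (Ici t₀) t)
    (hc : ∀ t ≥ t₀, c t = ‖w t‖ * ‖winv t‖) (ha : 0 ≤ a) :
    IsScalSol m t₀ hbar h p c L (fun _ => 0) (fun _ => a) (fun _ => a) := by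
  have hw : ∀ t, w t = 0 := fun t => Subsingleton.elim _ _
  have hp₀ : ∀ t ≥ t₀, p t = 0 := fun t ht => (uniqueDiffOn_Ici t₀ t ht).eq_deriv _ (hp t ht)
    (by simpa [hw] using hasDerivWithinAt_const t (Ici t₀) (0 : ℝ))
  refine ⟨continuousOn_const, fun _ _ => ha, fun _ _ => rfl, fun t ht => ?_⟩
  simpa [hp₀ t ht, hc t ht, hw] using hasDerivWithinAt_const t (Ici t₀) a

theorem stmt16_general
    (t₀ : ℝ) (n m : ℕ) (h : Fin m → ℝ → ℝ) (hlow hbar : ℝ)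
    (hpos : 0 < hlow) (hhle : hlow ≤ hbar)
    (hhc : ∀ i, ContinuousOn (h i) (Ici t₀))
    (hhb : ∀ i, ∀ t ≥ t₀, hlow ≤ h i t ∧ h i t ≤ hbar)
    (A : ℝ → (Euc n →L[ℝ] Euc n))
    (f : ℝ → Euc n → (Fin m → Euc n) → Euc n)
    (hfc : ContinuousOn (fun q : ℝ × Euc n × (Fin m → Euc n) => f q.1 q.2.1 q.2.2)
      (Ici t₀ ×ˢ (univ : Set (Euc n × (Fin m → Euc n)))))
    (L : ℝ → ℝ → (Fin m → ℝ) → ℝ)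
    (hLf : ∀ t ≥ t₀, ∀ a : Euc n, ∀ z : Fin m → Euc n,
      ‖f t a z‖ ≤ L t ‖a‖ (fun i => ‖z i‖))
    (w winv : ℝ → (Euc n →L[ℝ] Euc n))
    (hw0 : w t₀ = ContinuousLinearMap.id ℝ (Euc n))
    (hw : ∀ t ≥ t₀, HasDerivWithinAt w ((A t).comp (w t)) (Ici t₀) t)
    (hwinv : ∀ t ≥ t₀, (w t).comp (winv t) = ContinuousLinearMap.id ℝ (Euc n) ∧
      (winv t).comp (w t) = ContinuousLinearMap.id ℝ (Euc n))
    (p c : ℝ → ℝ)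
    (hp : ∀ t ≥ t₀, HasDerivWithinAt (fun s => Real.log ‖w s‖) (p t) (Ici t₀) t)
    (hc : ∀ t ≥ t₀, c t = ‖w t‖ * ‖winv t‖)
    (ζtil : ℝ) (hζ : 0 < ζtil)
    (μ : Fin (m + 1) → ℝ → ℝ → ℝ)
    (hμc : ∀ i, ContinuousOn (fun q : ℝ × ℝ => μ i q.1 q.2) (Ici t₀ ×ˢ Ici (0 : ℝ)))
    (hμnn : ∀ i, ∀ t ≥ t₀, ∀ a : ℝ, 0 ≤ a → 0 ≤ μ i t a)
    -- condition (5.1)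
    (h51 : ∀ t ≥ t₀, ∀ a : ℝ, ∀ z : Fin m → ℝ, 0 ≤ a → a ≤ ζtil →
      (∀ i, 0 ≤ z i ∧ z i ≤ ζtil) →
      L t a z ≤ μ 0 t ζtil * a + ∑ i : Fin m, μ i.succ t ζtil * z i)
    (φbar : ℝ) (hφbar : 0 < φbar)
    -- unique solvability of (2.15), (3.12) and (5.3) for all matched histories of
    -- sup-norm at most `φ̄`
    (hexun : ∀ φ : ℝ → Euc n, ContinuousOn φ (Icc (t₀ - hbar) t₀) →
      (∀ t ∈ Icc (t₀ - hbar) t₀, ‖φ t‖ ≤ φbar) →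
      (∃ x, IsVecSol n m t₀ hbar h A f (fun _ => 0) φ x) ∧
      (∀ x x', IsVecSol n m t₀ hbar h A f (fun _ => 0) φ x → IsVecSol n m t₀ hbar h A f (fun _ => 0) φ x' → ∀ t ≥ t₀, x t = x' t) ∧
      (∃ y, IsScalSol m t₀ hbar h p c L (fun _ => 0) (fun t => ‖φ t‖) y) ∧
      (∀ y y', IsScalSol m t₀ hbar h p c L (fun _ => 0) (fun t => ‖φ t‖) y → IsScalSol m t₀ hbar h p c L (fun _ => 0) (fun t => ‖φ t‖) y' → ∀ t ≥ t₀, y t = y' t) ∧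
      (∃ u, IsScalSol m t₀ hbar h p c (LinL m μ ζtil) (fun _ => 0) (fun t => ‖φ t‖) u) ∧
      (∀ u u', IsScalSol m t₀ hbar h p c (LinL m μ ζtil) (fun _ => 0) (fun t => ‖φ t‖) u → IsScalSol m t₀ hbar h p c (LinL m μ ζtil) (fun _ => 0) (fun t => ‖φ t‖) u' → ∀ t ≥ t₀, u t = u' t))
    : -- asymptotic stability case
    (((∀ ε > 0, ∃ δ > 0, ∀ ϕ y : ℝ → ℝ,
      ContinuousOn ϕ (Icc (t₀ - hbar) t₀) → (∀ t ∈ Icc (t₀ - hbar) t₀, 0 ≤ ϕ t) →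
      (∀ t ∈ Icc (t₀ - hbar) t₀, ϕ t < δ) → IsScalSol m t₀ hbar h p c (LinL m μ ζtil) (fun _ => 0) ϕ y →
      ∀ t ≥ t₀, y t < ε) ∧
      (∃ δ₃ > 0, ∀ ϕ y : ℝ → ℝ,
      ContinuousOn ϕ (Icc (t₀ - hbar) t₀) → (∀ t ∈ Icc (t₀ - hbar) t₀, 0 ≤ ϕ t) →
      (∀ t ∈ Icc (t₀ - hbar) t₀, ϕ t < δ₃) → IsScalSol m t₀ hbar h p c (LinL m μ ζtil) (fun _ => 0) ϕ y →
      Tendsto y atTop (nhds 0))) →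
     ((∀ ε > 0, ∃ δ > 0, ∀ ϕ y : ℝ → ℝ,
      ContinuousOn ϕ (Icc (t₀ - hbar) t₀) → (∀ t ∈ Icc (t₀ - hbar) t₀, 0 ≤ ϕ t) →
      (∀ t ∈ Icc (t₀ - hbar) t₀, ϕ t < δ) → IsScalSol m t₀ hbar h p c L (fun _ => 0) ϕ y →
      ∀ t ≥ t₀, y t < ε) ∧
      (∃ δ₃ > 0, ∀ ϕ y : ℝ → ℝ,
      ContinuousOn ϕ (Icc (t₀ - hbar) t₀) → (∀ t ∈ Icc (t₀ - hbar) t₀, 0 ≤ ϕ t) →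
      (∀ t ∈ Icc (t₀ - hbar) t₀, ϕ t < δ₃) → IsScalSol m t₀ hbar h p c L (fun _ => 0) ϕ y →
      Tendsto y atTop (nhds 0))) ∧
     ((∀ ε > 0, ∃ δ > 0, ∀ (φ : ℝ → Euc n) (x : ℝ → Euc n),
      ContinuousOn φ (Icc (t₀ - hbar) t₀) →
      (∀ t ∈ Icc (t₀ - hbar) t₀, ‖φ t‖ < δ) → IsVecSol n m t₀ hbar h A f (fun _ => 0) φ x →
      ∀ t ≥ t₀, ‖x t‖ < ε) ∧
      (∃ δ₃ > 0, ∀ (φ : ℝ → Euc n) (x : ℝ → Euc n),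
      ContinuousOn φ (Icc (t₀ - hbar) t₀) →
      (∀ t ∈ Icc (t₀ - hbar) t₀, ‖φ t‖ < δ₃) → IsVecSol n m t₀ hbar h A f (fun _ => 0) φ x →
      Tendsto (fun t => ‖x t‖) atTop (nhds 0)))) ∧
    -- exponential stability case
    ((∃ δ₅ > 0, ∃ c₁ > 0, ∃ c₂ > 0, ∀ ϕ y : ℝ → ℝ,
      ContinuousOn ϕ (Icc (t₀ - hbar) t₀) → (∀ t ∈ Icc (t₀ - hbar) t₀, 0 ≤ ϕ t) →
      (∀ t ∈ Icc (t₀ - hbar) t₀, ϕ t ≤ δ₅) → IsScalSol m t₀ hbar h p c (LinL m μ ζtil) (fun _ => 0) ϕ y →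
      ∀ t ≥ t₀, y t ≤ c₁ * sSup (ϕ '' Icc (t₀ - hbar) t₀) * Real.exp (-c₂ * (t - t₀))) →
     (∃ δ₅ > 0, ∃ c₁ > 0, ∃ c₂ > 0, ∀ ϕ y : ℝ → ℝ,
      ContinuousOn ϕ (Icc (t₀ - hbar) t₀) → (∀ t ∈ Icc (t₀ - hbar) t₀, 0 ≤ ϕ t) →
      (∀ t ∈ Icc (t₀ - hbar) t₀, ϕ t ≤ δ₅) → IsScalSol m t₀ hbar h p c L (fun _ => 0) ϕ y →
      ∀ t ≥ t₀, y t ≤ c₁ * sSup (ϕ '' Icc (t₀ - hbar) t₀) * Real.exp (-c₂ * (t - t₀))) ∧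
     (∃ δ₅ > 0, ∃ c₁ > 0, ∃ c₂ > 0, ∀ (φ : ℝ → Euc n) (x : ℝ → Euc n),
      ContinuousOn φ (Icc (t₀ - hbar) t₀) →
      (∀ t ∈ Icc (t₀ - hbar) t₀, ‖φ t‖ ≤ δ₅) → IsVecSol n m t₀ hbar h A f (fun _ => 0) φ x →
      ∀ t ≥ t₀, ‖x t‖ ≤ c₁ * sSup ((fun s => ‖φ s‖) '' Icc (t₀ - hbar) t₀) * Real.exp (-c₂ * (t - t₀)))) := by
  have hbar₀ : 0 ≤ hbar := hpos.le.trans hhle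
  obtain rfl | hn := Nat.eq_zero_or_pos n
  · have hconst := fun a => isScalSol_const_of_subsingleton (m := m) (hbar := hbar) (h := h)
      (L := LinL m μ ζtil) (a := a) hp hc
    exact ⟨fun H => (not_attractiveAt_of_const hconst H.2).elim,
      fun H => (not_expStableAt_of_const hbar₀ hconst H).elim⟩
  have : NeZero n := ⟨hn.ne'⟩
  have hcμ : ContinuousOn (fun t => c t * μ 0 t ζtil) (Ici t₀) :=
    ((continuousOn_norm_mul_norm_inverse hw hwinv).congr fun t ht => hc t ht).mul
      ((hμc 0).comp (continuousOn_id.prodMk continuousOn_const) fun t ht => ⟨ht, hζ.le⟩)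
  obtain ⟨K, hK⟩ := exists_hasDerivWithinAt_Ici_add hp hcμ
  have hc₀ : ∀ t ≥ t₀, 0 ≤ c t := fun t ht => hc t ht ▸ by positivity
  have hμ₀ : ∀ i, ∀ t ≥ t₀, 0 ≤ μ i t ζtil := fun i t ht => hμnn i t ht ζtil hζ.le
  have hex := fun ϱ => exists_isScalSol_of_norm (ϱ := ϱ) (r := min ζtil φbar)
    fun φ hφ hb => (hexun φ hφ fun t ht => (hb t ht).trans (min_le_right _ _)).2.2.2.2.1
  have hS : Dominates t₀ hbar ζtil (min ζtil φbar) _ (IsScalSol m t₀ hbar h p c L (fun _ => 0)) :=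
    .of_lt hex fun ϕ y ϱ u hy hu hϕϱ hϕr huζ => hy.lt_of_history_lt hbar₀ hpos hhb hc₀ hμ₀ h51
      hK hu huζ hϕϱ fun t ht => (hϕr t ht).trans (min_le_left _ _)
  have hV : Dominates t₀ hbar ζtil (min ζtil φbar) _
      (NormRel (IsVecSol n m t₀ hbar h A f (fun _ => 0))) := .of_lt hex <| by
    rintro _ _ ϱ u ⟨φ, x, hx, rfl, rfl⟩ hu hϕϱ hϕr huζ
    exact hx.norm_lt_of_history_lt hbar₀ hpos hhc hhb hfc hLf hw0 hw hwinv hp hc hμ₀ h51 hK hu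
      huζ hϕϱ fun t ht => (hϕr t ht).trans (min_le_left _ _)
  have hr : 0 < min ζtil φbar := lt_min hζ hφbar
  refine ⟨fun ⟨hs, ha⟩ => ⟨⟨StableAt.of_dominates hs hS hζ hr,
      AttractiveAt.of_dominates hs ha hS hζ hr
        fun _ _ hy t ht => hy.2.1 t (by simp only [mem_Ici]; linarith)⟩,
    (StableAt.of_dominates hs hV hζ hr).norm,
    (AttractiveAt.of_dominates hs ha hV hζ hr
      fun _ _ ⟨_, _, _, _, hy⟩ t _ => hy ▸ norm_nonneg _).norm⟩,
    fun he => ⟨ExpStableAt.of_dominates he hS hζ hr hbar₀,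
      (ExpStableAt.of_dominates he hV hζ hr hbar₀).norm⟩⟩

/-- Paper's Corollary 2: asymptotic (resp. exponential) stability of the trivial solution
of the linear scalar equation (5.3) implies asymptotic (resp. exponential) stability of
the trivial solutions of (3.12) and (2.15). -/
theorem stmt16
    (t₀ : ℝ) (n m : ℕ) (h : Fin m → ℝ → ℝ) (hlow hbar : ℝ)
    (hpos : 0 < hlow) (hhle : hlow ≤ hbar)
    (hhc : ∀ i, ContinuousOn (h i) (Ici t₀))
    (hhb : ∀ i, ∀ t ≥ t₀, hlow ≤ h i t ∧ h i t ≤ hbar)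
    (A : ℝ → (Euc n →L[ℝ] Euc n)) (hA : ContinuousOn A (Ici t₀))
    (f : ℝ → Euc n → (Fin m → Euc n) → Euc n)
    (hfc : ContinuousOn (fun q : ℝ × Euc n × (Fin m → Euc n) => f q.1 q.2.1 q.2.2)
      (Ici t₀ ×ˢ (univ : Set (Euc n × (Fin m → Euc n)))))
    (hfl : ∀ t ≥ t₀, ∀ z : Fin m → Euc n, LocallyLipschitz (fun a => f t a z))
    (hf0 : ∀ t ≥ t₀, f t 0 (fun _ => 0) = 0)
    (L : ℝ → ℝ → (Fin m → ℝ) → ℝ)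
    (hLc : ContinuousOn (fun q : ℝ × ℝ × (Fin m → ℝ) => L q.1 q.2.1 q.2.2)
      (Ici t₀ ×ˢ (univ : Set (ℝ × (Fin m → ℝ)))))
    (hLl : ∀ t ≥ t₀, ∀ z : Fin m → ℝ, LocallyLipschitz (fun a => L t a z))
    (hLnn : ∀ t ≥ t₀, ∀ a : ℝ, 0 ≤ a → ∀ z : Fin m → ℝ, (∀ i, 0 ≤ z i) → 0 ≤ L t a z)
    (hLmono : ∀ t ≥ t₀, ∀ a : ℝ, ∀ z z' : Fin m → ℝ, (∀ i, z i ≤ z' i) →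
      L t a z ≤ L t a z')
    (hL0 : ∀ t ≥ t₀, L t 0 (fun _ => 0) = 0)
    (hLf : ∀ t ≥ t₀, ∀ a : Euc n, ∀ z : Fin m → Euc n,
      ‖f t a z‖ ≤ L t ‖a‖ (fun i => ‖z i‖))
    (w winv : ℝ → (Euc n →L[ℝ] Euc n))
    (hw0 : w t₀ = ContinuousLinearMap.id ℝ (Euc n))
    (hw : ∀ t ≥ t₀, HasDerivWithinAt w ((A t).comp (w t)) (Ici t₀) t)
    (hwinv : ∀ t ≥ t₀, (w t).comp (winv t) = ContinuousLinearMap.id ℝ (Euc n) ∧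
      (winv t).comp (w t) = ContinuousLinearMap.id ℝ (Euc n))
    (p c : ℝ → ℝ)
    (hp : ∀ t ≥ t₀, HasDerivWithinAt (fun s => Real.log ‖w s‖) (p t) (Ici t₀) t)
    (hc : ∀ t ≥ t₀, c t = ‖w t‖ * ‖winv t‖)
    (ζtil : ℝ) (hζ : 0 < ζtil)
    (μ : Fin (m + 1) → ℝ → ℝ → ℝ)
    (hμc : ∀ i, ContinuousOn (fun q : ℝ × ℝ => μ i q.1 q.2) (Ici t₀ ×ˢ Ici (0 : ℝ)))
    (hμnn : ∀ i, ∀ t ≥ t₀, ∀ a : ℝ, 0 ≤ a → 0 ≤ μ i t a)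
    -- condition (5.1)
    (h51 : ∀ t ≥ t₀, ∀ a : ℝ, ∀ z : Fin m → ℝ, 0 ≤ a → a ≤ ζtil →
      (∀ i, 0 ≤ z i ∧ z i ≤ ζtil) →
      L t a z ≤ μ 0 t ζtil * a + ∑ i : Fin m, μ i.succ t ζtil * z i)
    (φbar : ℝ) (hφbar : 0 < φbar)
    -- unique solvability of (2.15), (3.12) and (5.3) for all matched histories of
    -- sup-norm at most `φ̄`
    (hexun : ∀ φ : ℝ → Euc n, ContinuousOn φ (Icc (t₀ - hbar) t₀) →
      (∀ t ∈ Icc (t₀ - hbar) t₀, ‖φ t‖ ≤ φbar) →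
      (∃ x, IsVecSol n m t₀ hbar h A f (fun _ => 0) φ x) ∧
      (∀ x x', IsVecSol n m t₀ hbar h A f (fun _ => 0) φ x → IsVecSol n m t₀ hbar h A f (fun _ => 0) φ x' → ∀ t ≥ t₀, x t = x' t) ∧
      (∃ y, IsScalSol m t₀ hbar h p c L (fun _ => 0) (fun t => ‖φ t‖) y) ∧
      (∀ y y', IsScalSol m t₀ hbar h p c L (fun _ => 0) (fun t => ‖φ t‖) y → IsScalSol m t₀ hbar h p c L (fun _ => 0) (fun t => ‖φ t‖) y' → ∀ t ≥ t₀, y t = y' t) ∧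
      (∃ u, IsScalSol m t₀ hbar h p c (LinL m μ ζtil) (fun _ => 0) (fun t => ‖φ t‖) u) ∧
      (∀ u u', IsScalSol m t₀ hbar h p c (LinL m μ ζtil) (fun _ => 0) (fun t => ‖φ t‖) u → IsScalSol m t₀ hbar h p c (LinL m μ ζtil) (fun _ => 0) (fun t => ‖φ t‖) u' → ∀ t ≥ t₀, u t = u' t))
    : -- asymptotic stability case
    (((∀ ε > 0, ∃ δ > 0, ∀ ϕ y : ℝ → ℝ,
      ContinuousOn ϕ (Icc (t₀ - hbar) t₀) → (∀ t ∈ Icc (t₀ - hbar) t₀, 0 ≤ ϕ t) →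
      (∀ t ∈ Icc (t₀ - hbar) t₀, ϕ t < δ) → IsScalSol m t₀ hbar h p c (LinL m μ ζtil) (fun _ => 0) ϕ y →
      ∀ t ≥ t₀, y t < ε) ∧
      (∃ δ₃ > 0, ∀ ϕ y : ℝ → ℝ,
      ContinuousOn ϕ (Icc (t₀ - hbar) t₀) → (∀ t ∈ Icc (t₀ - hbar) t₀, 0 ≤ ϕ t) →
      (∀ t ∈ Icc (t₀ - hbar) t₀, ϕ t < δ₃) → IsScalSol m t₀ hbar h p c (LinL m μ ζtil) (fun _ => 0) ϕ y →
      Tendsto y atTop (nhds 0))) →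
     ((∀ ε > 0, ∃ δ > 0, ∀ ϕ y : ℝ → ℝ,
      ContinuousOn ϕ (Icc (t₀ - hbar) t₀) → (∀ t ∈ Icc (t₀ - hbar) t₀, 0 ≤ ϕ t) →
      (∀ t ∈ Icc (t₀ - hbar) t₀, ϕ t < δ) → IsScalSol m t₀ hbar h p c L (fun _ => 0) ϕ y →
      ∀ t ≥ t₀, y t < ε) ∧
      (∃ δ₃ > 0, ∀ ϕ y : ℝ → ℝ,
      ContinuousOn ϕ (Icc (t₀ - hbar) t₀) → (∀ t ∈ Icc (t₀ - hbar) t₀, 0 ≤ ϕ t) →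
      (∀ t ∈ Icc (t₀ - hbar) t₀, ϕ t < δ₃) → IsScalSol m t₀ hbar h p c L (fun _ => 0) ϕ y →
      Tendsto y atTop (nhds 0))) ∧
     ((∀ ε > 0, ∃ δ > 0, ∀ (φ : ℝ → Euc n) (x : ℝ → Euc n),
      ContinuousOn φ (Icc (t₀ - hbar) t₀) →
      (∀ t ∈ Icc (t₀ - hbar) t₀, ‖φ t‖ < δ) → IsVecSol n m t₀ hbar h A f (fun _ => 0) φ x →
      ∀ t ≥ t₀, ‖x t‖ < ε) ∧
      (∃ δ₃ > 0, ∀ (φ : ℝ → Euc n) (x : ℝ → Euc n),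
      ContinuousOn φ (Icc (t₀ - hbar) t₀) →
      (∀ t ∈ Icc (t₀ - hbar) t₀, ‖φ t‖ < δ₃) → IsVecSol n m t₀ hbar h A f (fun _ => 0) φ x →
      Tendsto (fun t => ‖x t‖) atTop (nhds 0)))) ∧
    -- exponential stability case
    ((∃ δ₅ > 0, ∃ c₁ > 0, ∃ c₂ > 0, ∀ ϕ y : ℝ → ℝ,
      ContinuousOn ϕ (Icc (t₀ - hbar) t₀) → (∀ t ∈ Icc (t₀ - hbar) t₀, 0 ≤ ϕ t) →
      (∀ t ∈ Icc (t₀ - hbar) t₀, ϕ t ≤ δ₅) → IsScalSol m t₀ hbar h p c (LinL m μ ζtil) (fun _ => 0) ϕ y →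
      ∀ t ≥ t₀, y t ≤ c₁ * sSup (ϕ '' Icc (t₀ - hbar) t₀) * Real.exp (-c₂ * (t - t₀))) →
     (∃ δ₅ > 0, ∃ c₁ > 0, ∃ c₂ > 0, ∀ ϕ y : ℝ → ℝ,
      ContinuousOn ϕ (Icc (t₀ - hbar) t₀) → (∀ t ∈ Icc (t₀ - hbar) t₀, 0 ≤ ϕ t) →
      (∀ t ∈ Icc (t₀ - hbar) t₀, ϕ t ≤ δ₅) → IsScalSol m t₀ hbar h p c L (fun _ => 0) ϕ y →
      ∀ t ≥ t₀, y t ≤ c₁ * sSup (ϕ '' Icc (t₀ - hbar) t₀) * Real.exp (-c₂ * (t - t₀))) ∧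
     (∃ δ₅ > 0, ∃ c₁ > 0, ∃ c₂ > 0, ∀ (φ : ℝ → Euc n) (x : ℝ → Euc n),
      ContinuousOn φ (Icc (t₀ - hbar) t₀) →
      (∀ t ∈ Icc (t₀ - hbar) t₀, ‖φ t‖ ≤ δ₅) → IsVecSol n m t₀ hbar h A f (fun _ => 0) φ x →
      ∀ t ≥ t₀, ‖x t‖ ≤ c₁ * sSup ((fun s => ‖φ s‖) '' Icc (t₀ - hbar) t₀) * Real.exp (-c₂ * (t - t₀)))) :=
  stmt16_general t₀ n m h hlow hbar hpos hhle hhc hhb A f hfc L hLf w winv hw0 hw hwinv p c hp hc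
    ζtil hζ μ hμc hμnn h51 φbar hφbar hexun
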